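/- For positive semidefinite density matrices ρ, σ, the fidelity satisfies F(ρ,σ) = Tr((ρ^{-1} # σ) ρ), where F(ρ,σ) = Tr √(ρ^{1/2} σ ρ^{1/2}) and ρ^{-1} is the Moore–Penrose pseudoinverse. -/

import Mathlib

open Matrix Kronecker
open scoped ComplexOrder

noncomputable section
attribute [local instance] Classical.propDecidable

/-- Moore–Penrose pseudoinverse of a square complex matrix. -/
def pinv {n : Type*} [Fintype n] [DecidableEq n] (A : Matrix n n ℂ) : Matrix n n ℂ :=
  if h : ∃ B : Matrix n n ℂ,
      A * B * A = A ∧ B * A * B = B ∧ (A * B)ᴴ = A * B ∧ (B * A)ᴴ = B * A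
  then h.choose else 0

/-- Positive semidefinite square root (junk value `0` if the matrix is not PSD). -/
def msqrt {n : Type*} [Fintype n] [DecidableEq n] (A : Matrix n n ℂ) : Matrix n n ℂ :=
  if h : A.PosSemidef then
    h.1.eigenvectorUnitary.1 * diagonal ((↑) ∘ (√·) ∘ h.1.eigenvalues) *
      (star h.1.eigenvectorUnitary : Matrix n n ℂ)
  else 0

/-- `sgn(X) = U sgn(Σ) V*` for an SVD `X = U Σ V*`; equivalently `X (X* X)^{-1/2}`
with the Moore–Penrose pseudoinverse. -/
def msgn {n : Type*} [Fintype n] [DecidableEq n] (X : Matrix n n ℂ) : Matrix n n ℂ :=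
  X * pinv (msqrt (Xᴴ * X))

/-- Matrix geometric mean `A # B = A^{1/2} (A^{-1/2} B A^{-1/2})^{1/2} A^{1/2}`
(with Moore–Penrose pseudoinverses). -/
def geo {n : Type*} [Fintype n] [DecidableEq n] (A B : Matrix n n ℂ) : Matrix n n ℂ :=
  msqrt A * msqrt (pinv (msqrt A) * B * pinv (msqrt A)) * msqrt A

/-- The unnormalized maximally entangled state `|Ω⟩ = ∑ i, |i⟩ ⊗ |i⟩`. -/
def omegaVec (d : ℕ) : Fin d × Fin d → ℂ := fun p => if p.1 = p.2 then 1 else 0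

/-- Reduced density matrix of `|C⟩⟨C|` on the first subsystem
(partial trace over the second subsystem). -/
def reducedA {d : ℕ} (C : Fin d × Fin d → ℂ) : Matrix (Fin d) (Fin d) ℂ :=
  Matrix.of fun i j => ∑ k, C (i, k) * star (C (j, k))

/-- Partial trace over the first subsystem of the operator `|D⟩⟨C|`. -/
def trA {d : ℕ} (D C : Fin d × Fin d → ℂ) : Matrix (Fin d) (Fin d) ℂ :=
  Matrix.of fun j l => ∑ i, D (i, j) * star (C (i, l))

/-- `ℓ²→ℓ²` operator norm (largest singular value). -/
def opNorm {n : Type*} [Fintype n] [DecidableEq n] (A : Matrix n n ℂ) : ℝ :=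
  ‖(Matrix.toEuclideanCLM (𝕜 := ℂ) A : EuclideanSpace ℂ n →L[ℂ] EuclideanSpace ℂ n)‖

/-- `P` is the orthogonal projection onto the image (column space) of `A`. -/
def IsOrthProjOnto {n : Type*} [Fintype n] [DecidableEq n] (P A : Matrix n n ℂ) : Prop :=
  Pᴴ = P ∧ P * P = P ∧ LinearMap.range P.mulVecLin = LinearMap.range A.mulVecLin

/-- `η` is the smallest nonzero eigenvalue of the Hermitian matrix `M`. -/
def IsSmallestNonzeroEigenvalue {n : Type*} [Fintype n] [DecidableEq n]
    (M : Matrix n n ℂ) (η : ℝ) : Prop :=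
  ∃ hM : M.IsHermitian, η ≠ 0 ∧ (∃ i, hM.eigenvalues i = η) ∧
    ∀ i, hM.eigenvalues i ≠ 0 → η ≤ hM.eigenvalues i

/-!
Put `S = ρ^{1/2}`. For Hermitian matrices the pseudoinverse is the functional calculus of
`x ↦ x⁻¹` (with `0⁻¹ = 0`), so `(ρ⁺)^{1/2} = S⁺` and `(S⁺)⁺ = S`; hence `ρ⁺ # σ = S⁺ T S⁺` with
`T = (S σ S)^{1/2}`, and `Tr((ρ⁺ # σ) ρ) = Tr(P P T)` for the orthogonal projection `P = S S⁺` onto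
the range of `S`. Since `P` fixes `T² = S σ S`, it fixes `T`, and both sides equal `Tr T`.
-/

open scoped MatrixOrder

namespace Matrix

section

variable {n : Type*} [Fintype n]

theorem mul_eq_self_of_mul_mul_self_eq {P T : Matrix n n ℂ} (hP : P.IsHermitian)
    (hT : T.IsHermitian) (h : P * (T * T) = T * T) : P * T = T := by
  have h' : T * T * P = T * T := by
    simpa only [conjTranspose_mul, hP.eq, hT.eq, mul_assoc] using congrArg conjTranspose h
  have hzero : (T - P * T) * (T - P * T)ᴴ = 0 := by
    rw [conjTranspose_sub, conjTranspose_mul, hP.eq, hT.eq, sub_mul, mul_sub, mul_sub]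
    simp only [← mul_assoc, h', mul_assoc P, h]
    abel
  exact (sub_eq_zero.mp (self_mul_conjTranspose_eq_zero.mp hzero)).symm

def IsMoorePenroseInverse (A B : Matrix n n ℂ) : Prop :=
  A * B * A = A ∧ B * A * B = B ∧ (A * B)ᴴ = A * B ∧ (B * A)ᴴ = B * A

theorem IsMoorePenroseInverse.symm {A B : Matrix n n ℂ} (h : IsMoorePenroseInverse A B) :
    IsMoorePenroseInverse B A :=
  ⟨h.2.1, h.1, h.2.2.2, h.2.2.1⟩

theorem IsMoorePenroseInverse.unique {A B C : Matrix n n ℂ} (hB : IsMoorePenroseInverse A B)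
    (hC : IsMoorePenroseInverse A C) : B = C := by
  obtain ⟨b1, b2, b3, b4⟩ := hB
  obtain ⟨c1, c2, c3, c4⟩ := hC
  have hB : B = B * A * C :=
    calc B = B * (A * B)ᴴ := by rw [b3, ← mul_assoc, b2]
      _ = B * Bᴴ * (A * C * A)ᴴ := by rw [c1, conjTranspose_mul, mul_assoc]
      _ = B * (A * B)ᴴ * (A * C)ᴴ := by simp only [conjTranspose_mul, mul_assoc]
      _ = B * A * C := by rw [b3, c3, ← mul_assoc B A B, b2, mul_assoc]
  have hC : C = B * A * C :=
    calc C = (C * A)ᴴ * C := by rw [c4, c2]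
      _ = (A * B * A)ᴴ * Cᴴ * C := by rw [b1, conjTranspose_mul]
      _ = (B * A)ᴴ * (C * A)ᴴ * C := by simp only [conjTranspose_mul, mul_assoc]
      _ = B * A * C := by rw [b4, c4, mul_assoc (B * A), c2]
  rw [hB, ← hC]

variable [DecidableEq n]

theorem pinv_eq_of_isMoorePenroseInverse {A B : Matrix n n ℂ} (h : IsMoorePenroseInverse A B) :
    pinv A = B := by
  have hex : ∃ C, IsMoorePenroseInverse A C := ⟨B, h⟩
  exact (dif_pos hex).trans (hex.choose_spec.unique h)

end

namespace IsHermitian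

variable {n : Type*} [Fintype n] [DecidableEq n] {A : Matrix n n ℂ}

/-- Products in the functional calculus of a Hermitian matrix need no continuity side
conditions, the spectrum being finite. -/
theorem cfc_mul_cfc (f g : ℝ → ℝ) :
    cfc f A * cfc g A = cfc (fun x => f x * g x) A :=
  (cfc_mul f g A (finite_real_spectrum.continuousOn f) (finite_real_spectrum.continuousOn g)).symm

theorem cfc_comp_cfc (hA : A.IsHermitian) (f g : ℝ → ℝ) :
    cfc g (cfc f A) = cfc (g ∘ f) A :=
  (cfc_comp g f A hA.isSelfAdjoint ((finite_real_spectrum.image f).continuousOn g)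
    (finite_real_spectrum.continuousOn f)).symm

theorem mul_cfc (hA : A.IsHermitian) (f : ℝ → ℝ) : A * cfc f A = cfc (fun x => x * f x) A := by
  simpa only [cfc_id' ℝ A hA.isSelfAdjoint] using cfc_mul_cfc (A := A) (fun x => x) f

theorem cfc_mul (hA : A.IsHermitian) (f : ℝ → ℝ) : cfc f A * A = cfc (fun x => f x * x) A := by
  simpa only [cfc_id' ℝ A hA.isSelfAdjoint] using cfc_mul_cfc (A := A) f (fun x => x)

theorem isMoorePenroseInverse_cfc_inv (hA : A.IsHermitian) :
    IsMoorePenroseInverse A (cfc (·⁻¹ : ℝ → ℝ) A) := by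
  refine ⟨?_, ?_, ?_, ?_⟩ <;>
    simp only [hA.mul_cfc, hA.cfc_mul, cfc_mul_cfc]
  · conv_rhs => rw [← cfc_id' ℝ A hA.isSelfAdjoint]
    exact cfc_congr fun x _ => by by_cases hx : x = 0 <;> simp [hx]
  · exact cfc_congr fun x _ => by by_cases hx : x = 0 <;> simp [hx]
  all_goals exact IsSelfAdjoint.cfc

theorem pinv_eq_cfc_inv (hA : A.IsHermitian) : pinv A = cfc (·⁻¹ : ℝ → ℝ) A :=
  pinv_eq_of_isMoorePenroseInverse hA.isMoorePenroseInverse_cfc_inv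

theorem mul_pinv_mul_self (hA : A.IsHermitian) : A * pinv A * A = A := by
  rw [hA.pinv_eq_cfc_inv]
  exact hA.isMoorePenroseInverse_cfc_inv.1

theorem isHermitian_mul_pinv (hA : A.IsHermitian) : (A * pinv A).IsHermitian := by
  rw [hA.pinv_eq_cfc_inv]
  exact hA.isMoorePenroseInverse_cfc_inv.2.2.1

theorem commute_pinv (hA : A.IsHermitian) : Commute A (pinv A) := by
  rw [hA.pinv_eq_cfc_inv, Commute, SemiconjBy, hA.mul_cfc, hA.cfc_mul]
  exact cfc_congr fun x _ => mul_comm x x⁻¹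

theorem pinv_pinv (hA : A.IsHermitian) : pinv (pinv A) = A := by
  rw [hA.pinv_eq_cfc_inv]
  exact pinv_eq_of_isMoorePenroseInverse hA.isMoorePenroseInverse_cfc_inv.symm

end IsHermitian

section

variable {n : Type*} [Fintype n] [DecidableEq n] {A : Matrix n n ℂ}

theorem PosSemidef.msqrt_eq_cfc (hA : A.PosSemidef) : msqrt A = cfc Real.sqrt A := by
  rw [msqrt, dif_pos hA, hA.1.cfc_eq, IsHermitian.cfc, Unitary.conjStarAlgAut_apply]
  rfl

theorem isHermitian_msqrt (A : Matrix n n ℂ) : (msqrt A).IsHermitian := by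
  by_cases hA : A.PosSemidef
  · rw [hA.msqrt_eq_cfc]
    exact IsSelfAdjoint.cfc
  · rw [msqrt, dif_neg hA]
    exact isHermitian_zero

theorem PosSemidef.msqrt_mul_self (hA : A.PosSemidef) : msqrt A * msqrt A = A := by
  rw [hA.msqrt_eq_cfc, IsHermitian.cfc_mul_cfc]
  conv_rhs => rw [← cfc_id' ℝ A hA.1.isSelfAdjoint]
  exact cfc_congr fun x hx => Real.mul_self_sqrt (spectrum_nonneg_of_nonneg hA.nonneg hx)

theorem PosSemidef.msqrt_pinv (hA : A.PosSemidef) : msqrt (pinv A) = pinv (msqrt A) := by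
  have hinv : (cfc (·⁻¹ : ℝ → ℝ) A).PosSemidef :=
    nonneg_iff_posSemidef.mp <|
      cfc_nonneg fun x hx => inv_nonneg.mpr (spectrum_nonneg_of_nonneg hA.nonneg hx)
  rw [hA.1.pinv_eq_cfc_inv, hinv.msqrt_eq_cfc, hA.msqrt_eq_cfc,
    IsSelfAdjoint.cfc.isHermitian.pinv_eq_cfc_inv, hA.1.cfc_comp_cfc, hA.1.cfc_comp_cfc]
  exact cfc_congr fun x _ => Real.sqrt_inv x

theorem mul_msqrt_eq_self {P M : Matrix n n ℂ} (hP : P.IsHermitian) (h : P * M = M) :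
    P * msqrt M = msqrt M := by
  by_cases hM : M.PosSemidef
  · refine mul_eq_self_of_mul_mul_self_eq hP (isHermitian_msqrt M) ?_
    rw [hM.msqrt_mul_self, h]
  · rw [msqrt, dif_neg hM, mul_zero]

end

end Matrix

theorem fidelity_eq_trace_geo_mean_general {n : Type*} [Fintype n] [DecidableEq n]
    (ρ σ : Matrix n n ℂ) (hρ : ρ.PosSemidef) :
    (msqrt (msqrt ρ * σ * msqrt ρ)).trace = (geo (pinv ρ) σ * ρ).trace := by
  set S := msqrt ρ
  set T := msqrt (S * σ * S)
  have hS : S.IsHermitian := isHermitian_msqrt ρ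
  have hPT : S * pinv S * T = T :=
    mul_msqrt_eq_self hS.isHermitian_mul_pinv (by simp only [← mul_assoc, hS.mul_pinv_mul_self])
  symm
  calc (geo (pinv ρ) σ * ρ).trace = (pinv S * T * pinv S * (S * S)).trace := by
        rw [geo, hρ.msqrt_pinv, hS.pinv_pinv, hρ.msqrt_mul_self]
    _ = (pinv S * S * (S * pinv S) * T).trace := by
        rw [mul_assoc (pinv S * T), trace_mul_comm]
        simp only [mul_assoc]
    _ = (S * pinv S * (S * pinv S * T)).trace := by rw [← hS.commute_pinv.eq, mul_assoc]
    _ = T.trace := by rw [hPT, hPT]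

theorem fidelity_eq_trace_geo_mean {n : Type*} [Fintype n] [DecidableEq n]
    (ρ σ : Matrix n n ℂ) (hρ : ρ.PosSemidef) (hσ : σ.PosSemidef) :
    (msqrt (msqrt ρ * σ * msqrt ρ)).trace = (geo (pinv ρ) σ * ρ).trace :=
  fidelity_eq_trace_geo_mean_general ρ σ hρ
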